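/- For every τ ∈ [0, κ] and κ > 0, the integral ∫_0^κ E_1(|τ - τ'|) dτ' is finite and equals (2 - E_2(τ) - E_2(κ - τ)), where E_2(x) = ∫_1^∞ e^{-x t}/t^2 dt is the exponential integral of order 2 with E_2(0) = 1. -/

import Mathlib

open MeasureTheory Set Real intervalIntegral

/-- The exponential integral of order 1: `E₁(x) = ∫_1^∞ e^{-x t}/t dt`. -/
noncomputable def E₁ (x : ℝ) : ℝ := ∫ t in Set.Ioi (1:ℝ), Real.exp (-x * t) / t

/-- The exponential integral of order 2: `E₂(x) = ∫_1^∞ e^{-x t}/t² dt`. -/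
noncomputable def E₂ (x : ℝ) : ℝ := ∫ t in Set.Ioi (1:ℝ), Real.exp (-x * t) / t ^ 2

open scoped ENNReal

lemma meas_g : Measurable (fun p : ℝ × ℝ => Real.exp (-p.1 * p.2) / p.2) :=
  ((Real.measurable_exp.comp ((measurable_fst.neg).mul measurable_snd)).div measurable_snd)

lemma E1_sm : StronglyMeasurable E₁ :=
  meas_g.stronglyMeasurable.integral_prod_right'

lemma E1_nonneg (s : ℝ) : 0 ≤ E₁ s := by
  apply setIntegral_nonneg measurableSet_Ioi
  intro t ht
  have : (0:ℝ) < t := lt_trans one_pos ht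
  positivity

lemma int_pow2 : IntegrableOn (fun t : ℝ => t ^ (-2:ℝ)) (Ioi 1) :=
  integrableOn_Ioi_rpow_of_lt (by norm_num) one_pos

lemma int_E1_kernel {s : ℝ} (hs : 0 < s) :
    IntegrableOn (fun t => Real.exp (-s * t) / t) (Ioi 1) := by
  apply Integrable.mono (exp_neg_integrableOn_Ioi 1 hs)
  · exact (meas_g.comp (measurable_const.prodMk measurable_id)).aestronglyMeasurable
  · filter_upwards [ae_restrict_mem measurableSet_Ioi] with t ht
    have h1 : (1:ℝ) ≤ t := le_of_lt ht
    rw [Real.norm_eq_abs, Real.norm_eq_abs, abs_of_nonneg (by positivity),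
      abs_of_nonneg (Real.exp_nonneg _)]
    rw [div_le_iff₀ (by linarith)]
    nlinarith [Real.exp_nonneg (-s * t)]

lemma int_E2_kernel {s : ℝ} (hs : 0 ≤ s) :
    IntegrableOn (fun t => Real.exp (-s * t) / t ^ 2) (Ioi 1) := by
  apply Integrable.mono int_pow2
  · exact ((Real.measurable_exp.comp (measurable_id.const_mul (-s))).div
      (measurable_id.pow_const 2)).aestronglyMeasurable
  · filter_upwards [ae_restrict_mem measurableSet_Ioi] with t ht
    have h1 : (1:ℝ) ≤ t := le_of_lt ht
    have ht0 : (0:ℝ) < t := by linarith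
    rw [Real.norm_eq_abs, Real.norm_eq_abs, abs_of_nonneg (by positivity),
      abs_of_nonneg (by positivity)]
    rw [Real.rpow_neg ht0.le, Real.rpow_two]
    rw [div_le_iff₀ (by positivity), inv_mul_cancel₀ (by positivity)]
    exact Real.exp_le_one_iff.mpr (by nlinarith)

lemma E2_zero : E₂ 0 = 1 := by
  unfold E₂
  rw [show (∫ t in Set.Ioi (1:ℝ), Real.exp (-0 * t) / t ^ 2) = ∫ t in Set.Ioi (1:ℝ), t ^ (-2:ℝ) from
    setIntegral_congr_fun measurableSet_Ioi (fun t ht => by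
      have ht0 : (0:ℝ) < t := lt_trans one_pos ht
      rw [Real.rpow_neg ht0.le, Real.rpow_two]
      simp)]
  rw [integral_Ioi_rpow_of_lt (by norm_num) one_pos]
  norm_num

lemma inner_integral {t : ℝ} (ht : 0 < t) (a : ℝ) :
    ∫ s in (0:ℝ)..a, Real.exp (-s * t) / t = (1 - Real.exp (-a * t)) / t ^ 2 := by
  have h : ∀ s ∈ Set.uIcc (0:ℝ) a, HasDerivAt (fun s => -Real.exp (-s * t) / t ^ 2)
      (Real.exp (-s * t) / t) s := by
    intro s _
    have h1 : HasDerivAt (fun s : ℝ => -s * t) (-t) s := by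
      simpa using ((hasDerivAt_id s).neg.mul_const t)
    have ht' : t ≠ 0 := ne_of_gt ht
    have h3 := ((h1.exp).div_const (t ^ 2)).neg
    have heq : -(Real.exp (-s * t) * -t / t ^ 2) = Real.exp (-s * t) / t := by
      rw [mul_neg, neg_div, neg_neg, pow_two, mul_div_mul_right _ _ ht']
    rw [heq] at h3
    have h4 : (fun s => -Real.exp (-s * t) / t ^ 2) = -fun x => Real.exp (-x * t) / t ^ 2 := by
      funext x
      simp [neg_div]
    rw [h4]
    exact h3
  rw [intervalIntegral.integral_eq_sub_of_hasDerivAt h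
    ((Continuous.intervalIntegrable (by continuity) _ _))]
  have ht' : t ≠ 0 := ne_of_gt ht
  norm_num [sub_div, neg_div]
  ring

lemma E1_int_eq (a : ℝ) (ha : 0 ≤ a) :
    IntegrableOn E₁ (Ioo 0 a) ∧ ∫ s in Ioo 0 a, E₁ s = 1 - E₂ a := by
  have hE2le : E₂ a ≤ 1 := by
    rw [← E2_zero]
    apply setIntegral_mono_on (int_E2_kernel ha) (int_E2_kernel le_rfl) measurableSet_Ioi
    intro t ht
    have ht0 : (0:ℝ) < t := lt_trans one_pos ht
    gcongr
  have hint2 : IntegrableOn (fun t => (1 - Real.exp (-a * t)) / t ^ 2) (Ioi 1) := by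
    have hsub : IntegrableOn
        (fun t => Real.exp (-0 * t) / t ^ 2 - Real.exp (-a * t) / t ^ 2) (Ioi (1:ℝ)) :=
      (int_E2_kernel (le_refl 0)).sub (int_E2_kernel ha)
    apply hsub.congr_fun _ measurableSet_Ioi
    intro t ht
    simp [sub_div]
  have hval2 : ∫ t in Ioi (1:ℝ), (1 - Real.exp (-a * t)) / t ^ 2 = 1 - E₂ a := by
    rw [setIntegral_congr_fun measurableSet_Ioi
      (show EqOn (fun t => (1 - Real.exp (-a * t)) / t ^ 2)
        (fun t => Real.exp (-0 * t) / t ^ 2 - Real.exp (-a * t) / t ^ 2) (Ioi 1) from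
        fun t ht => by simp [sub_div]),
      integral_sub (int_E2_kernel (le_refl 0)) (int_E2_kernel ha)]
    rw [show (∫ t in Ioi (1:ℝ), Real.exp (-0 * t) / t ^ 2) = E₂ 0 from rfl, E2_zero]
    rfl
  have hswap : ∫⁻ s in Ioo (0:ℝ) a, ∫⁻ t in Ioi (1:ℝ), ENNReal.ofReal (Real.exp (-s * t) / t)
      = ∫⁻ t in Ioi (1:ℝ), ∫⁻ s in Ioo (0:ℝ) a, ENNReal.ofReal (Real.exp (-s * t) / t) :=
    lintegral_lintegral_swap ((ENNReal.measurable_ofReal.comp meas_g).aemeasurable)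
  have hL : ∫⁻ s in Ioo (0:ℝ) a, ENNReal.ofReal (E₁ s) = ENNReal.ofReal (1 - E₂ a) := by
    have h1 : ∫⁻ s in Ioo (0:ℝ) a, ENNReal.ofReal (E₁ s)
        = ∫⁻ s in Ioo (0:ℝ) a, ∫⁻ t in Ioi (1:ℝ), ENNReal.ofReal (Real.exp (-s * t) / t) := by
      apply setLIntegral_congr_fun measurableSet_Ioo
      intro s hs
      beta_reduce
      rw [← ofReal_integral_eq_lintegral_ofReal (int_E1_kernel hs.1)]
      · rfl
      filter_upwards [ae_restrict_mem measurableSet_Ioi] with t ht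
      have : (0:ℝ) < t := lt_trans one_pos ht
      positivity
    have h2 : ∫⁻ t in Ioi (1:ℝ), ∫⁻ s in Ioo (0:ℝ) a, ENNReal.ofReal (Real.exp (-s * t) / t)
        = ∫⁻ t in Ioi (1:ℝ), ENNReal.ofReal ((1 - Real.exp (-a * t)) / t ^ 2) := by
      apply setLIntegral_congr_fun measurableSet_Ioi
      intro t ht
      have ht0 : (0:ℝ) < t := lt_trans one_pos ht
      have hcint : IntegrableOn (fun s => Real.exp (-s * t) / t) (Ioo 0 a) :=
        ((Continuous.integrableOn_Icc (by continuity)).mono_set Ioo_subset_Icc_self)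
      beta_reduce
      rw [← ofReal_integral_eq_lintegral_ofReal hcint]
      · congr 1
        rw [← integral_Ioc_eq_integral_Ioo, ← intervalIntegral.integral_of_le ha]
        exact inner_integral ht0 a
      · filter_upwards [] with s
        positivity
    rw [h1, hswap, h2, ← ofReal_integral_eq_lintegral_ofReal hint2, hval2]
    filter_upwards [ae_restrict_mem measurableSet_Ioi] with t ht
    have ht0 : (0:ℝ) < t := lt_trans one_pos ht
    have : Real.exp (-a * t) ≤ 1 := Real.exp_le_one_iff.mpr (by nlinarith)
    have h2 : (0:ℝ) ≤ 1 - Real.exp (-a * t) := by linarith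
    positivity
  have hintE1 : IntegrableOn E₁ (Ioo 0 a) := by
    refine ⟨E1_sm.aestronglyMeasurable, ?_⟩
    rw [HasFiniteIntegral]
    have : ∫⁻ s in Ioo (0:ℝ) a, ‖E₁ s‖ₑ = ∫⁻ s in Ioo (0:ℝ) a, ENNReal.ofReal (E₁ s) := by
      apply setLIntegral_congr_fun measurableSet_Ioo
      exact fun s _ => Real.enorm_eq_ofReal (E1_nonneg s)
    rw [this, hL]
    exact ENNReal.ofReal_lt_top
  refine ⟨hintE1, ?_⟩
  rw [integral_eq_lintegral_of_nonneg_ae (ae_of_all _ fun s => E1_nonneg s)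
    E1_sm.aestronglyMeasurable.restrict, hL, ENNReal.toReal_ofReal (by linarith)]

lemma E1_intervalIntegrable (a : ℝ) (ha : 0 ≤ a) : IntervalIntegrable E₁ volume 0 a := by
  rw [intervalIntegrable_iff, uIoc_of_le ha]
  exact (E1_int_eq a ha).1.congr_set_ae Ioo_ae_eq_Ioc.symm

lemma E1_interval_val (a : ℝ) (ha : 0 ≤ a) : ∫ s in (0:ℝ)..a, E₁ s = 1 - E₂ a := by
  rw [intervalIntegral.integral_of_le ha, integral_Ioc_eq_integral_Ioo]
  exact (E1_int_eq a ha).2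

/-- For `τ ∈ [0,κ]`, `∫_0^κ E₁(|τ-τ'|) dτ'` is finite and equals
`2 - E₂(τ) - E₂(κ-τ)` (with `E₂(0) = 1`). -/
theorem stmt_7 (κ τ : ℝ) (hκ : 0 < κ) (hτ : τ ∈ Icc 0 κ) :
    E₂ 0 = 1 ∧
    IntervalIntegrable (fun τ' => E₁ |τ - τ'|) volume 0 κ ∧
    (∫ τ' in (0:ℝ)..κ, E₁ |τ - τ'|) = 2 - E₂ τ - E₂ (κ - τ) := by
  obtain ⟨hτ0, hτκ⟩ := hτ
  have hκτ : (0:ℝ) ≤ κ - τ := by linarith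
  have h1 := E1_intervalIntegrable τ hτ0
  have h2 := E1_intervalIntegrable _ hκτ
  have hcompA : IntervalIntegrable (fun x => E₁ (τ - x)) volume 0 τ := by
    have := (h1.comp_sub_left τ).symm
    simpa using this
  have hcompB : IntervalIntegrable (fun x => E₁ (x - τ)) volume τ κ := by
    have := h2.comp_sub_right τ
    simpa using this
  have hintA : IntervalIntegrable (fun τ' => E₁ |τ - τ'|) volume 0 τ := by
    rw [intervalIntegrable_iff, uIoc_of_le hτ0] at hcompA ⊢
    refine hcompA.congr_fun (fun x hx => ?_) measurableSet_Ioc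
    rw [abs_of_nonneg (by linarith [hx.2])]
  have hintB : IntervalIntegrable (fun τ' => E₁ |τ - τ'|) volume τ κ := by
    rw [intervalIntegrable_iff, uIoc_of_le hτκ] at hcompB ⊢
    refine hcompB.congr_fun (fun x hx => ?_) measurableSet_Ioc
    rw [abs_of_nonpos (by linarith [hx.1]), neg_sub]
  have valA : (∫ τ' in (0:ℝ)..τ, E₁ |τ - τ'|) = 1 - E₂ τ := by
    rw [intervalIntegral.integral_congr (g := fun x => E₁ (τ - x))
      (fun x hx => by
        rw [uIcc_of_le hτ0] at hx
        simp only []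
        rw [abs_of_nonneg (by linarith [hx.2])]),
      intervalIntegral.integral_comp_sub_left E₁ τ]
    simpa using E1_interval_val τ hτ0
  have valB : (∫ τ' in τ..κ, E₁ |τ - τ'|) = 1 - E₂ (κ - τ) := by
    rw [intervalIntegral.integral_congr (g := fun x => E₁ (x - τ))
      (fun x hx => by
        rw [uIcc_of_le hτκ] at hx
        simp only []
        rw [abs_of_nonpos (by linarith [hx.1]), neg_sub]),
      intervalIntegral.integral_comp_sub_right E₁ τ]
    simpa using E1_interval_val _ hκτ
  refine ⟨E2_zero, hintA.trans hintB, ?_⟩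
  rw [← intervalIntegral.integral_add_adjacent_intervals hintA hintB, valA, valB]
  ring
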